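/- Fix m > 0. For every pair of parameter tuples g = (b, a, v, R) and g' = (b', a', v', R') (with b, b' ∈ ℝ, a, a', v, v' ∈ EuclideanSpace ℝ (Fin 3), R, R' ∈ SO(3)), there exist a complex number c with |c| = 1 and a parameter tuple g'' = (b'', a'', v'', R''), both independent of u, such that for every u ∈ ℝ one has D_u(g') ∘ D_u(g) = c • D_u(g'') as operators on L²(EuclideanSpace ℝ (Fin 3), ℂ); moreover one can take b'' = b + b', v'' = v' + R'v and R'' = R'R. In other words, the family g ↦ D_u(g) is a ray representation whose multiplier c is the same for every value of the internal energy u. -/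

import Mathlib

/-!
The inner operator is evaluated at `q = R'⁻¹(p − m v')`, and
`R⁻¹(q − m v) = (R'R)⁻¹(p − m(v' + R'v))`. Orthogonality of `R'` gives
`‖q‖² = ‖p‖² − 2m⟪p, v'⟫ + m²‖v'‖²` and `⟪q, a⟫ = ⟪p, R'a⟫ − m⟪v', R'a⟫`; after dividing by `2m`,
the two phases add up to that of `D_u(b + b', a' + R'a − b v', v' + R'v, R'R)` plus
`m b ‖v'‖²/2 − m⟪v', R'a⟫`. This remainder is free of `u`, because `u` enters each phase only
through `u b`, which is additive in `b`.
-/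

open MeasureTheory

noncomputable section

/-- Momentum space `ℝ³`. -/
abbrev E3 : Type := EuclideanSpace ℝ (Fin 3)

/-- The Hilbert space `H = L²(ℝ³, ℂ)` with Lebesgue measure. -/
abbrev Hsp : Type := Lp ℂ 2 (volume : Measure E3)

/-- Action of a `3 × 3` real matrix on `ℝ³` by matrix–vector multiplication. -/
def act (R : Matrix (Fin 3) (Fin 3) ℝ) (x : E3) : E3 :=
  (EuclideanSpace.equiv (Fin 3) ℝ).symm (R.mulVec (EuclideanSpace.equiv (Fin 3) ℝ x))

/-- The pointwise formula for the Galilei operator `D_u(b, a, v, R)` of mass `m`: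
`(D_u(g)ψ)(p) = exp(i(u·b + (‖p‖²/(2m))·b + ⟪p, a⟫)) · ψ(R⁻¹(p − m·v))`. -/
def Dop (m u b : ℝ) (a v : E3) (R : Matrix (Fin 3) (Fin 3) ℝ) (ψ : E3 → ℂ) : E3 → ℂ :=
  fun p => Complex.exp (Complex.I * ((u * b + (‖p‖ ^ 2 / (2 * m)) * b + inner ℝ p a : ℝ) : ℂ)) *
    ψ (act R⁻¹ (p - m • v))

open Matrix

lemma act_mul (A B : Matrix (Fin 3) (Fin 3) ℝ) (x : E3) : act A (act B x) = act (A * B) x := by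
  simp only [act, ContinuousLinearEquiv.apply_symm_apply, mulVec_mulVec]

lemma act_one (x : E3) : act 1 x = x := by simp [act]

lemma act_sub (A : Matrix (Fin 3) (Fin 3) ℝ) (x y : E3) : act A (x - y) = act A x - act A y := by
  simp [act, mulVec_sub]

lemma act_smul (A : Matrix (Fin 3) (Fin 3) ℝ) (c : ℝ) (x : E3) : act A (c • x) = c • act A x := by
  simp [act, mulVec_smul]

lemma inner_act_transpose (A : Matrix (Fin 3) (Fin 3) ℝ) (x y : E3) :
    inner ℝ (act Aᵀ x) y = inner ℝ x (act A y) := by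
  simp only [act, PiLp.continuousLinearEquiv_symm_apply, EuclideanSpace.inner_eq_star_dotProduct,
    star_trivial]
  rw [dotProduct_mulVec, vecMul_transpose]
  rfl

lemma inv_eq_transpose_of_mem_orthogonalGroup {n : Type*} [Fintype n] [DecidableEq n]
    {R : Matrix n n ℝ} (hR : R ∈ orthogonalGroup n ℝ) : R⁻¹ = Rᵀ :=
  inv_eq_right_inv (by simpa using (mem_orthogonalGroup_iff n ℝ).mp hR)

lemma isUnit_det_of_mem_orthogonalGroup {n : Type*} [Fintype n] [DecidableEq n]
    {R : Matrix n n ℝ} (hR : R ∈ orthogonalGroup n ℝ) : IsUnit R.det :=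
  isUnit_det_of_right_inverse ((mem_orthogonalGroup_iff n ℝ).mp hR)

lemma act_inv_act {R : Matrix (Fin 3) (Fin 3) ℝ} (hR : IsUnit R.det) (x : E3) :
    act R⁻¹ (act R x) = x := by
  rw [act_mul, nonsing_inv_mul R hR, act_one]

lemma act_inv_sub_smul_act_inv (m : ℝ) (p v v' : E3) (R : Matrix (Fin 3) (Fin 3) ℝ)
    {R' : Matrix (Fin 3) (Fin 3) ℝ} (hR' : IsUnit R'.det) :
    act R⁻¹ (act R'⁻¹ (p - m • v') - m • v) = act (R' * R)⁻¹ (p - m • (v' + act R' v)) := by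
  rw [Matrix.mul_inv_rev, ← act_mul, smul_add, sub_add_eq_sub_sub, act_sub R'⁻¹ (p - m • v'),
    act_smul R'⁻¹ m (act R' v), act_inv_act hR']

lemma inner_act_inv {R : Matrix (Fin 3) (Fin 3) ℝ} (hR : R ∈ orthogonalGroup (Fin 3) ℝ)
    (x y : E3) : inner ℝ (act R⁻¹ x) y = inner ℝ x (act R y) := by
  rw [inv_eq_transpose_of_mem_orthogonalGroup hR, inner_act_transpose]

lemma norm_act_inv {R : Matrix (Fin 3) (Fin 3) ℝ} (hR : R ∈ orthogonalGroup (Fin 3) ℝ)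
    (x : E3) : ‖act R⁻¹ x‖ = ‖x‖ := by
  rw [← sq_eq_sq₀ (norm_nonneg _) (norm_nonneg _), ← real_inner_self_eq_norm_sq,
    ← real_inner_self_eq_norm_sq, inner_act_inv hR, act_mul,
    mul_nonsing_inv R (isUnit_det_of_mem_orthogonalGroup hR), act_one]

def galileiPhase (m u b : ℝ) (a p : E3) : ℝ := u * b + ‖p‖ ^ 2 / (2 * m) * b + inner ℝ p a

lemma Dop_apply (m u b : ℝ) (a v : E3) (R : Matrix (Fin 3) (Fin 3) ℝ) (ψ : E3 → ℂ) (p : E3) :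
    Dop m u b a v R ψ p =
      Complex.exp (Complex.I * galileiPhase m u b a p) * ψ (act R⁻¹ (p - m • v)) :=
  rfl

def galileiCocycle (m b : ℝ) (a v' : E3) (R' : Matrix (Fin 3) (Fin 3) ℝ) : ℝ :=
  m * b * ‖v'‖ ^ 2 / 2 - m * inner ℝ v' (act R' a)

lemma galileiPhase_add_galileiPhase {m : ℝ} (hm : m ≠ 0) (u b b' : ℝ) (a a' v' p : E3)
    {R' : Matrix (Fin 3) (Fin 3) ℝ} (hR' : R' ∈ orthogonalGroup (Fin 3) ℝ) :
    galileiPhase m u b' a' p + galileiPhase m u b a (act R'⁻¹ (p - m • v')) =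
      galileiCocycle m b a v' R' + galileiPhase m u (b + b') (a' + act R' a - b • v') p := by
  have hnorm :
      ‖act R'⁻¹ (p - m • v')‖ ^ 2 = ‖p‖ ^ 2 - 2 * m * inner ℝ p v' + m ^ 2 * ‖v'‖ ^ 2 := by
    rw [norm_act_inv hR', norm_sub_sq_real, real_inner_smul_right, norm_smul, Real.norm_eq_abs,
      mul_pow, sq_abs]
    ring
  have hinner : inner ℝ (act R'⁻¹ (p - m • v')) a =
      inner ℝ p (act R' a) - m * inner ℝ v' (act R' a) := by
    rw [inner_act_inv hR', inner_sub_left, real_inner_smul_left]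
  simp only [galileiPhase, galileiCocycle, hnorm, hinner, inner_sub_right, inner_add_right,
    real_inner_smul_right]
  field_simp
  ring

theorem Dop_Dop {m : ℝ} (hm : m ≠ 0) (u b b' : ℝ) (a v a' v' : E3) (R : Matrix (Fin 3) (Fin 3) ℝ)
    {R' : Matrix (Fin 3) (Fin 3) ℝ} (hR' : R' ∈ orthogonalGroup (Fin 3) ℝ) (ψ : E3 → ℂ) :
    Dop m u b' a' v' R' (Dop m u b a v R ψ) = fun p =>
      Complex.exp (Complex.I * galileiCocycle m b a v' R') *
        Dop m u (b + b') (a' + act R' a - b • v') (v' + act R' v) (R' * R) ψ p := by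
  funext p
  rw [Dop_apply, Dop_apply, Dop_apply,
    act_inv_sub_smul_act_inv m p v v' R (isUnit_det_of_mem_orthogonalGroup hR'), ← mul_assoc,
    ← mul_assoc, ← Complex.exp_add, ← Complex.exp_add, ← mul_add, ← mul_add, ← Complex.ofReal_add,
    ← Complex.ofReal_add, galileiPhase_add_galileiPhase hm u b b' a a' v' p hR']

theorem statement11_general
    (m : ℝ) (hm : 0 < m) (b b' : ℝ) (a v a' v' : E3)
    (R R' : Matrix (Fin 3) (Fin 3) ℝ)
    (hR' : R' ∈ Matrix.specialOrthogonalGroup (Fin 3) ℝ) :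
    ∃ c : ℂ, ‖c‖ = 1 ∧ ∃ a'' : E3,
      ∀ u : ℝ, ∀ ψ : E3 → ℂ,
        Dop m u b' a' v' R' (Dop m u b a v R ψ) =
          fun p => c * Dop m u (b + b') a'' (v' + act R' v) (R' * R) ψ p :=
  ⟨_, Complex.norm_exp_I_mul_ofReal _, _,
    fun u => Dop_Dop hm.ne' u b b' a v a' v' R (mem_specialOrthogonalGroup_iff.mp hR').1⟩

/-- For `m > 0` and any two parameter tuples `g = (b, a, v, R)` and
`g' = (b', a', v', R')` with `R, R' ∈ SO(3)`, there exist a unimodular constant `c ∈ ℂ` and a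
parameter tuple `g'' = (b'', a'', v'', R'')`, both independent of `u`, with `b'' = b + b'`,
`v'' = v' + R'v`, `R'' = R'R`, such that for every internal energy `u`,
`D_u(g') ∘ D_u(g) = c • D_u(g'')`: the family `g ↦ D_u(g)` is a ray representation whose
multiplier `c` is the same for every `u`. -/
theorem statement11
    (m : ℝ) (hm : 0 < m) (b b' : ℝ) (a v a' v' : E3)
    (R R' : Matrix (Fin 3) (Fin 3) ℝ)
    (hR : R ∈ Matrix.specialOrthogonalGroup (Fin 3) ℝ)
    (hR' : R' ∈ Matrix.specialOrthogonalGroup (Fin 3) ℝ) :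
    ∃ c : ℂ, ‖c‖ = 1 ∧ ∃ a'' : E3,
      ∀ u : ℝ, ∀ ψ : E3 → ℂ,
        Dop m u b' a' v' R' (Dop m u b a v R ψ) =
          fun p => c * Dop m u (b + b') a'' (v' + act R' v) (R' * R) ψ p :=
  statement11_general m hm b b' a v a' v' R R' hR'
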